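/- For any lists p and y* over a type α with decidable equality, the minimum of D(p ++ s, y*) over all completions s is attained by some suffix of the ground truth: there exists k with 0 ≤ k ≤ |y*| such that D(p ++ y*_{≥k}, y*) = sInf { D(p ++ s, y*) : s ∈ List α }. -/

import Mathlib

/-- Cost structure for Levenshtein distance (as formerly in Mathlib). -/
structure Levenshtein.Cost (α β δ : Type*) where
  delete : α → δ
  insert : β → δ
  substitute : α → β → δ

/-- Unit costs (as formerly in Mathlib). -/
def Levenshtein.defaultCost {α : Type*} [DecidableEq α] : Levenshtein.Cost α α ℕ where
  delete _ := 1
  insert _ := 1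
  substitute a b := if a = b then 0 else 1

/-- One step of the dynamic program (as formerly in Mathlib). -/
def Levenshtein.impl {α β δ : Type*} [AddZeroClass δ] [Min δ] (C : Levenshtein.Cost α β δ)
    (xs : List α) (y : β) (d : {r : List δ // 0 < r.length}) : {r : List δ // 0 < r.length} :=
  let ⟨ds, w⟩ := d
  xs.zip (ds.zip ds.tail) |>.foldr
    (init := ⟨[C.insert y + ds.getLast (List.ne_nil_of_length_pos w)], by simp⟩)
    (fun ⟨x, d₀, d₁⟩ ⟨r, w⟩ =>
      ⟨min (C.delete x + r[0]) (min (C.insert y + d₀) (C.substitute x y + d₁)) :: r, by simp⟩)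

/-- Levenshtein distances of all suffixes of `xs` to `ys` (as formerly in Mathlib). -/
def suffixLevenshtein {α β δ : Type*} [AddZeroClass δ] [Min δ] (C : Levenshtein.Cost α β δ)
    (xs : List α) (ys : List β) : {r : List δ // 0 < r.length} :=
  ys.foldr
    (Levenshtein.impl C xs)
    (xs.foldr (init := ⟨[0], by simp⟩) (fun a ⟨r, w⟩ => ⟨(C.delete a + r[0]) :: r, by simp⟩))

/-- Levenshtein distance (as formerly in Mathlib). -/
def levenshtein {α β δ : Type*} [AddZeroClass δ] [Min δ] (C : Levenshtein.Cost α β δ)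
    (xs : List α) (ys : List β) : δ :=
  let ⟨r, _⟩ := suffixLevenshtein C xs ys
  r[0]

/-- Unit-cost Levenshtein edit distance between two lists. -/
def editDist {α : Type*} [DecidableEq α] (u v : List α) : ℕ :=
  levenshtein Levenshtein.defaultCost u v

/-- `rowMin p y = min over 0 ≤ j ≤ |y|` of the edit distance between `p` and `y.take j`. -/
def rowMin {α : Type*} [DecidableEq α] (p y : List α) : ℕ :=
  (Finset.range (y.length + 1)).inf' (by simp) (fun j => editDist p (y.take j))

/-!
An optimal alignment of `p ++ s` with `y*` matches `p` against some prefix `y*_{<j}`, so every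
completion costs at least `min_j D(p, y*_{<j})` (`rowMin`). Conversely, appending the same list to
both sides never increases the distance, so for a minimising `k` the completion `y*_{≥k}` costs at
most `D(p, y*_{<k})`.
-/

section Levenshtein

variable {α β δ : Type*} [AddZeroClass δ] [Min δ] (C : Levenshtein.Cost α β δ)

theorem Levenshtein.impl_cons (x : α) (xs : List α) (y : β) (d : δ) (ds : List δ) (w)
    (w' : 0 < ds.length) :
    Levenshtein.impl C (x :: xs) y ⟨d :: ds, w⟩ =
      let ⟨r, w⟩ := Levenshtein.impl C xs y ⟨ds, w'⟩
      ⟨min (C.delete x + r[0]) (min (C.insert y + d) (C.substitute x y + ds[0])) :: r, by simp⟩ :=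
  match ds, w' with | _ :: _, _ => rfl

theorem Levenshtein.impl_length (xs : List α) (y : β) (d : {r : List δ // 0 < r.length})
    (w : d.1.length = xs.length + 1) :
    (Levenshtein.impl C xs y d).1.length = xs.length + 1 := by
  induction xs generalizing d with
  | nil => rfl
  | cons x xs ih =>
    match d, w with
    | ⟨d₁ :: d₂ :: ds, _⟩, w =>
      rw [Levenshtein.impl_cons C x xs y d₁ (d₂ :: ds) _ (by simp), List.length_cons]
      exact congrArg (· + 1) (ih ⟨d₂ :: ds, by simp⟩ (by simpa using w))

theorem suffixLevenshtein_length (xs : List α) (ys : List β) :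
    (suffixLevenshtein C xs ys).1.length = xs.length + 1 := by
  induction ys with
  | nil =>
    induction xs with
    | nil => rfl
    | cons _ xs ih => simp_all [suffixLevenshtein]
  | cons y ys ih => exact Levenshtein.impl_length C xs y _ ih

theorem suffixLevenshtein_cons₂ (xs : List α) (y : β) (ys : List β) :
    suffixLevenshtein C xs (y :: ys) = Levenshtein.impl C xs y (suffixLevenshtein C xs ys) := rfl

theorem levenshtein_eq_getElem_zero (xs : List α) (ys : List β) :
    levenshtein C xs ys = (suffixLevenshtein C xs ys).1[0]'(suffixLevenshtein C xs ys).2 := rfl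

theorem Subtype.list_ext_of_getElem_zero {γ : Type*} {l m : {r : List γ // 0 < r.length}}
    (h₀ : l.1[0]'l.2 = m.1[0]'m.2) (h : l.1.tail = m.1.tail) : l = m := by
  match l, m with
  | ⟨_ :: _, _⟩, ⟨_ :: _, _⟩ => simp_all

theorem suffixLevenshtein_cons₁ (x : α) (xs : List α) (ys : List β) :
    suffixLevenshtein C (x :: xs) ys =
      ⟨levenshtein C (x :: xs) ys :: (suffixLevenshtein C xs ys).1, by simp⟩ := by
  induction ys with
  | nil => rfl
  | cons y ys ih =>
    refine Subtype.list_ext_of_getElem_zero rfl ?_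
    rw [suffixLevenshtein_cons₂, suffixLevenshtein_cons₂, ih]
    match suffixLevenshtein C xs ys with
    | ⟨_ :: _, _⟩ =>
      rw [Levenshtein.impl_cons C x xs y _ _ _ (by simp)]
      rfl

theorem levenshtein_cons_nil (x : α) (xs : List α) :
    levenshtein C (x :: xs) ([] : List β) = C.delete x + levenshtein C xs [] := rfl

theorem levenshtein_nil_cons (y : β) (ys : List β) :
    levenshtein C ([] : List α) (y :: ys) = C.insert y + levenshtein C [] ys := by
  have hl := suffixLevenshtein_length C ([] : List α) ys
  rw [levenshtein_eq_getElem_zero, levenshtein_eq_getElem_zero, suffixLevenshtein_cons₂]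
  generalize suffixLevenshtein C ([] : List α) ys = d at hl ⊢
  match d, hl with
  | ⟨[_], _⟩, _ => rfl

theorem levenshtein_cons_cons (x : α) (xs : List α) (y : β) (ys : List β) :
    levenshtein C (x :: xs) (y :: ys) =
      min (C.delete x + levenshtein C xs (y :: ys))
        (min (C.insert y + levenshtein C (x :: xs) ys)
          (C.substitute x y + levenshtein C xs ys)) := by
  rw [levenshtein_eq_getElem_zero, suffixLevenshtein_cons₂, suffixLevenshtein_cons₁,
    levenshtein_eq_getElem_zero C xs (y :: ys), suffixLevenshtein_cons₂,
    levenshtein_eq_getElem_zero C xs ys]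
  match suffixLevenshtein C xs ys with
  | ⟨_ :: _, _⟩ =>
    rw [Levenshtein.impl_cons C x xs y _ _ _ (by simp)]
    rfl

end Levenshtein

section EditDist

variable {α : Type*} [DecidableEq α]

theorem editDist_cons_nil (x : α) (u : List α) : editDist (x :: u) [] = 1 + editDist u [] :=
  levenshtein_cons_nil _ x u

theorem editDist_nil_cons (y : α) (v : List α) : editDist [] (y :: v) = 1 + editDist [] v :=
  levenshtein_nil_cons _ y v

theorem editDist_cons_cons (x y : α) (u v : List α) :
    editDist (x :: u) (y :: v) =
      min (1 + editDist u (y :: v))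
        (min (1 + editDist (x :: u) v) ((if x = y then 0 else 1) + editDist u v)) :=
  levenshtein_cons_cons _ x u y v

theorem editDist_cons_left_le (x : α) (u v : List α) :
    editDist (x :: u) v ≤ 1 + editDist u v := by
  cases v with
  | nil => exact (editDist_cons_nil x u).le
  | cons y v => exact (editDist_cons_cons x y u v).trans_le (min_le_left _ _)

theorem editDist_cons_right_le (y : α) (u v : List α) :
    editDist u (y :: v) ≤ 1 + editDist u v := by
  cases u with
  | nil => exact (editDist_nil_cons y v).le
  | cons x u =>
    exact (editDist_cons_cons x y u v).trans_le ((min_le_right _ _).trans (min_le_left _ _))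

theorem editDist_cons_cons_le (x y : α) (u v : List α) :
    editDist (x :: u) (y :: v) ≤ (if x = y then 0 else 1) + editDist u v :=
  (editDist_cons_cons x y u v).trans_le ((min_le_right _ _).trans (min_le_right _ _))

@[simp]
theorem editDist_self (u : List α) : editDist u u = 0 := by
  induction u with
  | nil => rfl
  | cons x u ih => simpa [ih] using editDist_cons_cons_le x x u u

theorem editDist_append_right_le (w : List α) : ∀ u v : List α,
    editDist (u ++ w) (v ++ w) ≤ editDist u v
  | [], [] => by simp
  | [], y :: v => by
    rw [editDist_nil_cons]
    exact (editDist_cons_right_le y _ _).trans (by gcongr; exact editDist_append_right_le w [] v)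
  | x :: u, [] => by
    rw [editDist_cons_nil]
    exact (editDist_cons_left_le x _ _).trans (by gcongr; exact editDist_append_right_le w u [])
  | x :: u, y :: v => by
    rw [editDist_cons_cons]
    refine le_min ?_ (le_min ?_ ?_)
    · exact (editDist_cons_left_le x _ _).trans
        (by gcongr; exact editDist_append_right_le w u (y :: v))
    · exact (editDist_cons_right_le y _ _).trans
        (by gcongr; exact editDist_append_right_le w (x :: u) v)
    · exact (editDist_cons_cons_le x y _ _).trans
        (by gcongr; exact editDist_append_right_le w u v)

end EditDist

section RowMin

variable {α : Type*} [DecidableEq α]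

theorem rowMin_le_editDist_take (p y : List α) {j : ℕ} (hj : j ≤ y.length) :
    rowMin p y ≤ editDist p (y.take j) :=
  Finset.inf'_le _ (Finset.mem_range_succ_iff.mpr hj)

theorem exists_editDist_take_eq_rowMin (p y : List α) :
    ∃ k ≤ y.length, editDist p (y.take k) = rowMin p y := by
  obtain ⟨k, hk, hmin⟩ := Finset.exists_mem_eq_inf' (s := Finset.range (y.length + 1))
    (by simp) (fun j => editDist p (y.take j))
  exact ⟨k, Finset.mem_range_succ_iff.mp hk, hmin.symm⟩

theorem rowMin_cons_left_le (x : α) (p y : List α) : rowMin (x :: p) y ≤ 1 + rowMin p y := by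
  obtain ⟨j, hj, hmin⟩ := exists_editDist_take_eq_rowMin p y
  rw [← hmin]
  exact (rowMin_le_editDist_take _ _ hj).trans (editDist_cons_left_le x _ _)

theorem rowMin_cons_right_le (z : α) (p y : List α) : rowMin p (z :: y) ≤ 1 + rowMin p y := by
  obtain ⟨j, hj, hmin⟩ := exists_editDist_take_eq_rowMin p y
  rw [← hmin]
  exact (rowMin_le_editDist_take p (z :: y) (j := j + 1) (by simpa using hj)).trans
    (editDist_cons_right_le z _ _)

theorem rowMin_cons_cons_le (x z : α) (p y : List α) :
    rowMin (x :: p) (z :: y) ≤ (if x = z then 0 else 1) + rowMin p y := by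
  obtain ⟨j, hj, hmin⟩ := exists_editDist_take_eq_rowMin p y
  rw [← hmin]
  exact (rowMin_le_editDist_take (x :: p) (z :: y) (j := j + 1) (by simpa using hj)).trans
    (editDist_cons_cons_le x z _ _)

theorem rowMin_le_editDist_append (s : List α) : ∀ p y : List α,
    rowMin p y ≤ editDist (p ++ s) y
  | [], y => (rowMin_le_editDist_take [] y (Nat.zero_le _)).trans (by simp)
  | x :: p, [] => by
    rw [List.cons_append, editDist_cons_nil]
    exact (rowMin_cons_left_le x p []).trans (by gcongr; exact rowMin_le_editDist_append s p [])
  | x :: p, z :: y => by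
    rw [List.cons_append, editDist_cons_cons]
    refine le_min ?_ (le_min ?_ ?_)
    · exact (rowMin_cons_left_le x p _).trans
        (by gcongr; exact rowMin_le_editDist_append s p (z :: y))
    · exact (rowMin_cons_right_le z _ y).trans
        (by gcongr; exact rowMin_le_editDist_append s (x :: p) y)
    · exact (rowMin_cons_cons_le x z p y).trans
        (by gcongr; exact rowMin_le_editDist_append s p y)
  termination_by p y => p.length + y.length

end RowMin

theorem exists_optimal_suffix_completion {α : Type*} [DecidableEq α]
    (p ystar : List α) :
    ∃ k ≤ ystar.length,
      editDist (p ++ ystar.drop k) ystar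
        = sInf {d | ∃ s : List α, d = editDist (p ++ s) ystar} := by
  obtain ⟨k, hk, hmin⟩ := exists_editDist_take_eq_rowMin p ystar
  have hsuffix : editDist (p ++ ystar.drop k) ystar ≤ rowMin p ystar := by
    simpa [hmin] using editDist_append_right_le (ystar.drop k) p (ystar.take k)
  refine ⟨k, hk, le_antisymm (hsuffix.trans (le_csInf ⟨_, [], rfl⟩ ?_)) (Nat.sInf_le ⟨_, rfl⟩)⟩
  rintro _ ⟨s, rfl⟩
  exact rowMin_le_editDist_append s p ystar
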